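/- arXiv:2201.03880 — 3 statements merged into one kernel-verified Lean document; each statement's English description precedes it below -/
import Mathlib

section
/- For every positive integer k, if G is a graph of pathwidth less than k that has a path of order n, then G has an induced path of order at least (1/3)·n^(1/k). -/
/-!
Nodes of a path representation are linearly ordered, and every model is an interval. Let `l` be
a path of `G` and let `u`, `v` be vertices of `l` whose models reach furthest to the left and to
the right. A shortest `u`–`v` path `S` of `G` is induced, and since consecutive models along `S`
meet, the models of `S` cover every node whose bag meets `l`. If `S` is short, deleting it cuts
`l` into at most `|S| + 1` pieces, one of which is long, and every bag meeting that piece has lost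
a vertex of `S`, so the piece lies in an induced subgraph of pathwidth one less. Induction on the
width with the invariant `t ^ k ≤ |l|` then yields an induced path on at least `t / 3` vertices,
and `t = n ^ (1 / k)` gives the theorem.
-/

open SimpleGraph Real

/-- `G` has a (not necessarily induced) path on `n` vertices. -/
def HasPathOfOrder {V : Type*} (G : SimpleGraph V) (n : ℕ) : Prop :=
  ∃ (u v : V) (p : G.Walk u v), p.IsPath ∧ p.length + 1 = n

/-- `G` has a Hamiltonian path. -/
def HasHamPath {V : Type*} (G : SimpleGraph V) : Prop :=
  ∃ (u v : V) (p : G.Walk u v), p.IsPath ∧ ∀ w, w ∈ p.support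

/-- `G` has an induced path on at least `r` vertices (an induced subgraph isomorphic to a
path graph on `m ≥ r` vertices). -/
def HasInducedPathGE {V : Type*} (G : SimpleGraph V) (r : ℝ) : Prop :=
  ∃ m : ℕ, r ≤ (m : ℝ) ∧ Nonempty (pathGraph m ↪g G)

/-- A tree (or path) representation of `G` over the graph `T`: every vertex `v` of `G` has a
nonempty connected model `model v ⊆ V(T)`, and models of adjacent vertices intersect. -/
structure TreeRep {V N : Type*} (G : SimpleGraph V) (T : SimpleGraph N) where
  model : V → Set N
  model_connected : ∀ v, (T.induce (model v)).Connected
  adj_meet : ∀ ⦃u v⦄, G.Adj u v → (model u ∩ model v).Nonempty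

namespace TreeRep

variable {V N : Type*} {G : SimpleGraph V} {T : SimpleGraph N}

/-- The bag of the representation at a node `t`. -/
def bag (R : TreeRep G T) (t : N) : Set V := {v | t ∈ R.model v}

/-- The representation has width less than `k`, i.e. all bags have at most `k` vertices. -/
def WidthLT (R : TreeRep G T) (k : ℕ) : Prop := ∀ t, (R.bag t).ncard ≤ k

/-- The representation has width at most `k`, i.e. all bags have at most `k + 1` vertices. -/
def WidthLE (R : TreeRep G T) (k : ℕ) : Prop := ∀ t, (R.bag t).ncard ≤ k + 1

/-- The weight of a path `p` of `T`: the number of vertices of `G` whose model meets `p`. -/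
noncomputable def pathWeight (R : TreeRep G T) {x y : N} (p : T.Walk x y) : ℕ :=
  {v : V | ∃ t ∈ p.support, t ∈ R.model v}.ncard

/-- A representation is varied if no bag is contained in the bag at a neighboring node. -/
def Varied (R : TreeRep G T) : Prop := ∀ ⦃t t'⦄, T.Adj t t' → ¬ R.bag t ⊆ R.bag t'

/-- The representation has adhesion less than `a`: the adhesion set of every edge of `T`
has fewer than `a` vertices. -/
def AdhesionLT (R : TreeRep G T) (a : ℕ) : Prop :=
  ∀ ⦃t t'⦄, T.Adj t t' → (R.bag t ∩ R.bag t').ncard < a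

/-- The torso of the representation at a node `t`: the subgraph induced on the bag at `t`
together with all edges inside adhesion sets of edges of `T` incident to `t`. -/
def torso (R : TreeRep G T) (t : N) : SimpleGraph (R.bag t) :=
  SimpleGraph.fromRel (fun u v =>
    G.Adj u v ∨ ∃ t', T.Adj t t' ∧ (u : V) ∈ R.bag t' ∧ (v : V) ∈ R.bag t')

end TreeRep

/-- `G` has pathwidth less than `k`: it has a representation over a path all of whose bags
have at most `k` vertices. -/
def PathwidthLT {V : Type*} (G : SimpleGraph V) (k : ℕ) : Prop :=
  ∃ (m : ℕ) (R : TreeRep G (pathGraph (m + 1))), R.WidthLT k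

/-- `G` has treewidth less than `k`: it has a representation over a tree all of whose bags
have at most `k` vertices. -/
def TreewidthLT {V : Type*} (G : SimpleGraph V) (k : ℕ) : Prop :=
  ∃ (N : Type) (_ : Fintype N) (T : SimpleGraph N), T.IsTree ∧
    ∃ R : TreeRep G T, R.WidthLT k

/-- `G` has treewidth at most `k`. -/
def TreewidthLE {V : Type*} (G : SimpleGraph V) (k : ℕ) : Prop :=
  ∃ (N : Type) (_ : Fintype N) (T : SimpleGraph N), T.IsTree ∧
    ∃ R : TreeRep G T, R.WidthLE k

/-- A leaf of a graph: a vertex with at most one neighbor. -/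
def IsLeafNode {N : Type*} (T : SimpleGraph N) (l : N) : Prop :=
  (T.neighborSet l).Subsingleton

/-- `H` is obtained from `G` by a sequence of edge contractions: there is a surjection
from `V(G)` onto `V(H)` with connected fibers inducing the adjacency of `H`. -/
def IsContraction {W V : Type*} (H : SimpleGraph W) (G : SimpleGraph V) : Prop :=
  ∃ f : V → W, Function.Surjective f ∧
    (∀ w : W, (G.induce (f ⁻¹' {w})).Connected) ∧
    (∀ x y : W, H.Adj x y ↔ x ≠ y ∧ ∃ u v : V, f u = x ∧ f v = y ∧ G.Adj u v)

/-- `G` is an interval graph: the intersection graph of a family of real intervals. -/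
def IsIntervalGraph {V : Type*} (G : SimpleGraph V) : Prop :=
  ∃ l r : V → ℝ, (∀ v, l v ≤ r v) ∧
    ∀ u v : V, G.Adj u v ↔ u ≠ v ∧ max (l u) (l v) ≤ min (r u) (r v)

/-- The internal vertices of a walk: vertices of the walk distinct from its two endpoints. -/
def WalkInternal {V : Type*} {G : SimpleGraph V} {x y : V} (p : G.Walk x y) : Set V :=
  {w | w ∈ p.support ∧ w ≠ x ∧ w ≠ y}

/-- `H` is a topological minor of `G`: there are branch vertices `φ u` for `u ∈ V(H)` and
internally disjoint paths of `G` joining them, one for each edge of `H`. -/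
def IsTopMinor {W V : Type*} (H : SimpleGraph W) (G : SimpleGraph V) : Prop :=
  ∃ (φ : W ↪ V) (P : ∀ ⦃u v : W⦄, H.Adj u v → G.Walk (φ u) (φ v)),
    (∀ ⦃u v⦄ (h : H.Adj u v), (P h).IsPath) ∧
    (∀ ⦃u v⦄ (h : H.Adj u v), P h.symm = (P h).reverse) ∧
    (∀ ⦃u v⦄ (h : H.Adj u v), ∀ w ∈ WalkInternal (P h), w ∉ Set.range φ) ∧
    (∀ ⦃u v u' v'⦄ (h : H.Adj u v) (h' : H.Adj u' v'), s(u, v) ≠ s(u', v') →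
      ∀ w ∈ WalkInternal (P h), w ∉ WalkInternal (P h'))

/-- `H` is (an isomorphic copy of) a subgraph of `G`. -/
def ContainsSubgraphCopy {A B : Type*} (H : SimpleGraph A) (G : SimpleGraph B) : Prop :=
  ∃ f : A ↪ B, ∀ u v : A, H.Adj u v → G.Adj (f u) (f v)

/-- `G` is `k`-degenerate: every (induced) subgraph has a vertex of degree at most `k`. -/
def Degenerate {V : Type*} (G : SimpleGraph V) (k : ℕ) : Prop :=
  ∀ s : Set V, s.Nonempty → ∃ v ∈ s, {w | w ∈ s ∧ G.Adj v w}.ncard ≤ k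

/-- The cycle on `ZMod m` (for `m ≥ 3` this is the cycle graph on `m` vertices). -/
def ringGraph (m : ℕ) : SimpleGraph (ZMod m) :=
  SimpleGraph.fromRel (fun i j => j = i + 1)

/-- Cliquewidth expressions with labels in `Fin k`. -/
inductive CWExpr (k : ℕ) where
  | vertex (l : Fin k) : CWExpr k
  | union (e₁ e₂ : CWExpr k) : CWExpr k
  | addEdges (i j : Fin k) (hij : i ≠ j) (e : CWExpr k) : CWExpr k
  | relabel (f : Fin k → Fin k) (e : CWExpr k) : CWExpr k

namespace CWExpr

variable {k : ℕ}

/-- The vertex set of the graph described by a cliquewidth expression. -/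
def verts : CWExpr k → Type
  | vertex _ => Unit
  | union e₁ e₂ => e₁.verts ⊕ e₂.verts
  | addEdges _ _ _ e => e.verts
  | relabel _ e => e.verts

/-- The labelling of the vertices described by a cliquewidth expression. -/
def label : (e : CWExpr k) → e.verts → Fin k
  | vertex l, _ => l
  | union e₁ _, Sum.inl x => e₁.label x
  | union _ e₂, Sum.inr x => e₂.label x
  | addEdges _ _ _ e, x => e.label x
  | relabel f e, x => f (e.label x)

/-- The adjacency relation described by a cliquewidth expression. -/
def adj : (e : CWExpr k) → e.verts → e.verts → Prop
  | vertex _, _, _ => False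
  | union e₁ _, Sum.inl x, Sum.inl y => e₁.adj x y
  | union _ e₂, Sum.inr x, Sum.inr y => e₂.adj x y
  | union _ _, _, _ => False
  | addEdges i j _ e, x, y =>
      e.adj x y ∨ (e.label x = i ∧ e.label y = j) ∨ (e.label x = j ∧ e.label y = i)
  | relabel _ e, x, y => e.adj x y

/-- The graph described by a cliquewidth expression. -/
def graph (e : CWExpr k) : SimpleGraph e.verts := SimpleGraph.fromRel e.adj

end CWExpr

/-- `G` has cliquewidth at most `k`: it is isomorphic to the graph of a cliquewidth
expression with at most `k` labels. -/
def CliquewidthLE {V : Type*} (G : SimpleGraph V) (k : ℕ) : Prop :=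
  ∃ e : CWExpr k, Nonempty (G ≃g e.graph)

/-- `G` has `(k, Δ)`-almost bounded degree: removing at most `k` vertices yields a graph of
maximum degree at most `Δ`. -/
def AlmostBoundedDegree {V : Type*} (G : SimpleGraph V) (k Δ : ℕ) : Prop :=
  ∃ X : Set V, X.ncard ≤ k ∧ ∀ v ∉ X, {w | w ∉ X ∧ G.Adj v w}.ncard ≤ Δ

/-- An embedding scheme for `H`: a rotation system (a permutation of the darts that is,
around each vertex, a single cycle on the darts leaving that vertex) together with a
signature on the edges. -/
structure EmbScheme {W : Type*} (H : SimpleGraph W) where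
  rot : Equiv.Perm H.Dart
  rot_fst : ∀ d : H.Dart, (rot d).fst = d.fst
  rot_cyclic : ∀ d d' : H.Dart, d.fst = d'.fst → ∃ n : ℕ, (rot ^ n) d = d'
  sign : Sym2 W → Bool

namespace EmbScheme

variable {W : Type*} {H : SimpleGraph W}

/-- The face-tracing step of an embedding scheme, acting on darts with a direction. -/
def faceStep (S : EmbScheme H) : H.Dart × Bool → H.Dart × Bool :=
  fun p =>
    let s' := xor p.2 (S.sign p.1.edge)
    ((if s' then S.rot.symm p.1.symm else S.rot p.1.symm), s')

/-- The number of orbits of a function. -/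
noncomputable def orbitCount {α : Type*} (f : α → α) : ℕ :=
  Nat.card (Quotient (Relation.EqvGen.setoid (fun x y => f x = y)))

/-- The scheme describes an embedding of `H` in a surface of Euler genus at most `g`.
Isolated vertices each bound one face; every other face is traced twice by `faceStep`,
so the number of faces is `orbitCount (faceStep) / 2` plus the number of isolated
vertices, and the Euler genus of the embedding is `2c - |V| + |E| - F`. -/
def GenusLE (S : EmbScheme H) (g : ℕ) : Prop :=
  2 * Nat.card H.ConnectedComponent + Nat.card H.edgeSet ≤
    g + Nat.card W +
      (orbitCount S.faceStep / 2 + Nat.card {v : W | ∀ w, ¬ H.Adj v w})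

/-- The cycle `e 0, e 1, …, e (m-1)` is a facial cycle of the embedding scheme `S`:
its consecutive darts are consecutive in a face traversal. -/
def IsFacialCycle (S : EmbScheme H) {m : ℕ} (e : ZMod m → W)
    (hadj : ∀ x : ZMod m, H.Adj (e x) (e (x + 1))) : Prop :=
  ∃ b : ZMod m → Bool, ∀ x : ZMod m,
    S.faceStep (⟨(e x, e (x + 1)), hadj x⟩, b x) =
      (⟨(e (x + 1), e (x + 1 + 1)), hadj (x + 1)⟩, b (x + 1))

end EmbScheme

/-- `Hs` has a `C`-vortex of width less than `k`, where `C` is the cycle of `G₀` given by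
`e`: the vertices common to `Hs` and `G₀` are exactly those of `C`, and `Hs` has a cycle
representation over `C` in which the model of each vertex of `C` contains that vertex and
every bag has at most `k` vertices. -/
def IsVortex {V : Type*} {G : SimpleGraph V} (Hs G₀ : G.Subgraph) {m : ℕ}
    (e : ZMod m → G₀.verts) (k : ℕ) : Prop :=
  Hs.verts ∩ G₀.verts = Subtype.val '' Set.range e ∧
  ∃ model : Hs.verts → Set (ZMod m),
    (∀ v, ((ringGraph m).induce (model v)).Connected) ∧
    (∀ (x : ZMod m) (v : Hs.verts), (e x : V) = (v : V) → x ∈ model v) ∧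
    (∀ ⦃u v⦄, Hs.coe.Adj u v → (model u ∩ model v).Nonempty) ∧
    (∀ t : ZMod m, {v : Hs.verts | t ∈ model v}.ncard ≤ k)

/-- `G` is `(g, p, a, k)`-almost-embeddable. -/
def AlmostEmbeddable {V : Type*} (G : SimpleGraph V) (g p a k : ℕ) : Prop :=
  ∃ A : Set V, A.ncard ≤ a ∧
  ∃ s : ℕ, s ≤ p ∧
  ∃ (G₀ : G.Subgraph) (Gv : Fin s → G.Subgraph),
    (G₀ ⊔ ⨆ i, Gv i) = (⊤ : G.Subgraph).deleteVerts A ∧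
    (∀ i j, i ≠ j → Disjoint (Gv i).verts (Gv j).verts) ∧
    ∃ S : EmbScheme G₀.coe, S.GenusLE g ∧
    ∃ (m : Fin s → ℕ) (e : ∀ i, ZMod (m i) → G₀.verts)
      (hadj : ∀ i x, G₀.coe.Adj (e i x) (e i (x + 1))),
      (∀ i, 3 ≤ m i) ∧
      (∀ i, Function.Injective (e i)) ∧
      (∀ i, S.IsFacialCycle (e i) (hadj i)) ∧
      (∀ i j, i ≠ j → Disjoint (Set.range (e i)) (Set.range (e j))) ∧
      (∀ i, IsVortex (Gv i) G₀ (e i) k)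

namespace List

theorem exists_infix_forall_not_length_le {α : Type*} (p : α → Bool) (l : List α) :
    ∃ r, r <:+: l ∧ (∀ x ∈ r, p x = false) ∧
      l.length ≤ (l.countP p + 1) * r.length + l.countP p := by
  match hfind : l.find? p with
  | none =>
    refine ⟨l, infix_refl l, fun x hx => by simpa using find?_eq_none.1 hfind x hx, ?_⟩
    nlinarith
  | some b =>
    obtain ⟨hb, l₁, l₂, rfl, hl₁⟩ := find?_eq_some_iff_append.1 hfind
    obtain ⟨r, hr, hrp, hlen⟩ := exists_infix_forall_not_length_le p l₂
    have hc : (l₁ ++ b :: l₂).countP p = l₂.countP p + 1 := by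
      simp [countP_append, countP_eq_zero.2 (fun x hx => by simpa using hl₁ x hx), hb]
    simp only [hc, length_append, length_cons]
    rcases le_total r.length l₁.length with h | h
    · exact ⟨l₁, infix_append [] l₁ (b :: l₂), fun x hx => by simpa using hl₁ x hx, by nlinarith⟩
    · exact ⟨r, hr.trans ⟨l₁ ++ [b], [], by simp⟩, hrp, by nlinarith⟩
termination_by l.length
decreasing_by subst_vars; simp only [length_append, length_cons]; omega

theorem Nodup.countP_mem_le_length {α : Type*} [DecidableEq α] {l : List α} (hl : l.Nodup)
    (s : List α) : l.countP (· ∈ s) ≤ s.length := by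
  rw [countP_eq_length_filter]
  exact ((hl.filter _).subperm fun x hx => by simpa using (mem_filter.1 hx).2).length_le

end List

theorem pow_le_of_pow_succ_le_mul_add {t a h : ℝ} {k : ℕ} (hh : 1 ≤ h) (ht : 3 * h < t)
    (hn : t ^ (k + 1) ≤ (h + 1) * a + h) : t ^ k ≤ a := by
  by_contra! ha
  have htk : 1 ≤ t ^ k := one_le_pow₀ (by linarith)
  have : (h + 1) * a < (h + 1) * t ^ k := by gcongr
  rw [pow_succ] at hn
  nlinarith

namespace SimpleGraph

variable {V : Type*} {G : SimpleGraph V}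

theorem _root_.List.IsChain.reachable_of_mem {l : List V} (hl : l.IsChain G.Adj) {x y : V}
    (hx : x ∈ l) (hy : y ∈ l) : G.Reachable x y := by
  have hne : l ≠ [] := List.ne_nil_of_mem hx
  have hhead : ∀ z ∈ l, G.Reachable (l.head hne) z :=
    hl.induction _ _ (fun _ _ hab h => h.trans hab.reachable) fun _ => .refl _
  exact (hhead x hx).symm.trans (hhead y hy)

namespace Walk

variable {u v : V}

theorem not_adj_getVert_of_length_eq_dist (p : G.Walk u v) (hp : p.length = G.dist u v)
    {i j : ℕ} (hij : i + 1 < j) (hj : j ≤ p.length) : ¬ G.Adj (p.getVert i) (p.getVert j) := by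
  intro hadj
  have := G.dist_le ((p.take i).append (cons hadj (p.drop j)))
  simp only [length_append, length_cons, take_length, drop_length] at this
  omega

def pathGraphEmbeddingOfLengthEqDist (p : G.Walk u v) (hp : p.length = G.dist u v) :
    pathGraph (p.length + 1) ↪g G where
  toFun i := p.getVert i
  inj' i j hij := Fin.ext <| (p.isPath_of_length_eq_dist hp).getVert_injOn
    (Nat.lt_succ_iff.1 i.2) (Nat.lt_succ_iff.1 j.2) hij
  map_rel_iff' {i j} := by
    change G.Adj (p.getVert i) (p.getVert j) ↔ _
    rw [pathGraph_adj]
    refine ⟨fun hadj => ?_, ?_⟩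
    · have hij : (i : ℕ) ≠ j := fun h => G.irrefl (h ▸ hadj)
      by_contra! hne
      rcases hij.lt_or_gt with hij | hji
      · exact p.not_adj_getVert_of_length_eq_dist hp (by omega) (by omega) hadj
      · exact p.not_adj_getVert_of_length_eq_dist hp (by omega) (by omega) hadj.symm
    · rintro (h | h)
      · simpa [← h] using p.adj_getVert_succ (i := i) (by omega)
      · simpa [← h] using (p.adj_getVert_succ (i := j) (by omega)).symm

end Walk

theorem HasInducedPathGE.of_induce {s : Set V} {r : ℝ} (h : HasInducedPathGE (G.induce s) r) :
    HasInducedPathGE G r :=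
  let ⟨m, hm, ⟨e⟩⟩ := h
  ⟨m, hm, ⟨(Embedding.induce s).comp e⟩⟩

end SimpleGraph

theorem Set.OrdConnected.of_preconnected_induce_pathGraph {n : ℕ} {C : Set (Fin n)}
    (hC : ((pathGraph n).induce C).Preconnected) : C.OrdConnected := by
  suffices ∀ {p q : C} (w : ((pathGraph n).induce C).Walk p q), Set.Icc (p : Fin n) q ⊆ C from
    ⟨fun a ha b hb => let ⟨w⟩ := hC ⟨a, ha⟩ ⟨b, hb⟩; this w⟩
  intro p q w
  induction w with
  | nil => simp
  | @cons p p' q hadj w ih =>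
    rintro x ⟨hpx, hxq⟩
    rcases hpx.eq_or_lt with rfl | hpx
    · exact p.2
    · simp only [comap_adj, Function.Embedding.subtype_apply, pathGraph_adj] at hadj
      refine ih ⟨?_, hxq⟩
      rw [Fin.le_def]; rw [Fin.lt_def] at hpx
      omega

namespace TreeRep

variable {V N : Type*} {G : SimpleGraph V} {T : SimpleGraph N}

theorem model_nonempty (R : TreeRep G T) (v : V) : (R.model v).Nonempty :=
  Set.nonempty_coe_sort.1 (R.model_connected v).nonempty

theorem isEmpty_of_widthLT_zero [Finite V] (R : TreeRep G T) (hR : R.WidthLT 0) : IsEmpty V := by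
  refine ⟨fun v => ?_⟩
  obtain ⟨t, ht⟩ := R.model_nonempty v
  have hbag : R.bag t = ∅ := (Set.ncard_eq_zero).1 (Nat.le_zero.1 (hR t))
  exact hbag.subset ht

def induce (R : TreeRep G T) (s : Set V) : TreeRep (G.induce s) T where
  model v := R.model v
  model_connected v := R.model_connected v
  adj_meet _ _ h := R.adj_meet h

theorem widthLT_induce [Finite V] (R : TreeRep G T) {k : ℕ} (hR : R.WidthLT (k + 1)) {s : Set V}
    (hs : ∀ t, ∀ y ∈ s, t ∈ R.model y → ∃ z ∉ s, t ∈ R.model z) : (R.induce s).WidthLT k := by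
  intro t
  rcases ((R.induce s).bag t).eq_empty_or_nonempty with h | ⟨y, hy⟩
  · simp [h]
  obtain ⟨z, hzs, hz⟩ := hs t y y.2 hy
  have hsub : Subtype.val '' (R.induce s).bag t ⊆ R.bag t \ {z} := by
    rintro _ ⟨y, hy, rfl⟩
    exact ⟨hy, fun h => hzs (h ▸ y.2)⟩
  calc ((R.induce s).bag t).ncard = (Subtype.val '' (R.induce s).bag t).ncard :=
        (Set.ncard_image_of_injective _ Subtype.val_injective).symm
    _ ≤ (R.bag t \ {z}).ncard := Set.ncard_le_ncard hsub
    _ = (R.bag t).ncard - 1 := Set.ncard_sdiff_singleton_of_mem hz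
    _ ≤ k := by have := hR t; omega

variable {n : ℕ}

theorem ordConnected_model (R : TreeRep G (pathGraph n)) (v : V) : (R.model v).OrdConnected :=
  .of_preconnected_induce_pathGraph (R.model_connected v).preconnected

theorem exists_mem_support_mem_model (R : TreeRep G (pathGraph n)) {u v : V} (w : G.Walk u v)
    {a b x : Fin n} (ha : a ∈ R.model u) (hb : b ∈ R.model v) (hax : a ≤ x) (hxb : x ≤ b) :
    ∃ y ∈ w.support, x ∈ R.model y := by
  induction w generalizing a with
  | nil => exact ⟨_, Walk.start_mem_support _, (R.ordConnected_model _).out ha hb ⟨hax, hxb⟩⟩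
  | @cons u u' v huu' w ih =>
    by_cases hc : ∃ c ∈ R.model u, x ≤ c
    · obtain ⟨c, hc, hxc⟩ := hc
      exact ⟨u, Walk.start_mem_support _, (R.ordConnected_model u).out ha hc ⟨hax, hxc⟩⟩
    · simp only [not_exists, not_and, not_le] at hc
      obtain ⟨c, hcu, hcu'⟩ := R.adj_meet huu'
      obtain ⟨y, hy, hxy⟩ := ih hcu' hb (hc c hcu).le
      exact ⟨y, List.mem_cons_of_mem _ hy, hxy⟩

theorem exists_forall_walk_cover (R : TreeRep G (pathGraph n)) {X : Set V} (hX : X.Nonempty) :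
    ∃ u ∈ X, ∃ v ∈ X, ∀ (w : G.Walk u v) {x : Fin n} {y : V}, y ∈ X → x ∈ R.model y →
      ∃ z ∈ w.support, x ∈ R.model z := by
  set U : Set (Fin n) := {x | ∃ y ∈ X, x ∈ R.model y}
  have hU : U.Nonempty :=
    let ⟨y, hy⟩ := hX
    let ⟨x, hx⟩ := R.model_nonempty y
    ⟨x, y, hy, hx⟩
  obtain ⟨a, ⟨u, hu, ha⟩, hmin⟩ := U.exists_min_image id U.toFinite hU
  obtain ⟨b, ⟨v, hv, hb⟩, hmax⟩ := U.exists_max_image id U.toFinite hU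
  exact ⟨u, hu, v, hv, fun w x y hy hx =>
    R.exists_mem_support_mem_model w ha hb (hmin x ⟨y, hy, hx⟩) (hmax x ⟨y, hy, hx⟩)⟩

theorem exists_pathGraph_embedding_and_infix_widthLT [Finite V] (R : TreeRep G (pathGraph n))
    {k : ℕ} (hR : R.WidthLT (k + 1)) {l : List V} (hl : l.IsChain G.Adj) (hnd : l.Nodup)
    (hne : l ≠ []) :
    ∃ h : ℕ, 0 < h ∧ Nonempty (pathGraph h ↪g G) ∧ ∃ r, r <:+: l ∧
      (R.induce {x | x ∈ r}).WidthLT k ∧ l.length ≤ (h + 1) * r.length + h := by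
  classical
  obtain ⟨u, hu, v, hv, hcover⟩ := R.exists_forall_walk_cover (X := {x | x ∈ l})
    (List.exists_mem_of_ne_nil l hne)
  obtain ⟨S, hS⟩ := (hl.reachable_of_mem hu hv).exists_walk_length_eq_dist
  obtain ⟨r, hrl, hrS, hlen⟩ := l.exists_infix_forall_not_length_le (· ∈ S.support)
  refine ⟨S.length + 1, S.length.succ_pos, ⟨S.pathGraphEmbeddingOfLengthEqDist hS⟩, r, hrl,
    R.widthLT_induce hR fun t y hy hty => ?_, ?_⟩
  · obtain ⟨z, hz, htz⟩ := hcover S (hrl.subset hy) hty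
    exact ⟨z, fun hzr => by simpa [hz] using hrS z hzr, htz⟩
  · have hc := hnd.countP_mem_le_length S.support
    rw [S.length_support] at hc
    exact hlen.trans (Nat.add_le_add (Nat.mul_le_mul_right _ (by omega)) hc)

theorem hasInducedPathGE_div_three [Finite V] (R : TreeRep G (pathGraph n)) {k : ℕ}
    (hR : R.WidthLT k) {l : List V} (hl : l.IsChain G.Adj) (hnd : l.Nodup) (hne : l ≠ [])
    {t : ℝ} (ht : t ^ k ≤ l.length) : HasInducedPathGE G (t / 3) := by
  induction k generalizing V with
  | zero => exact ((R.isEmpty_of_widthLT_zero hR).false (l.head hne)).elim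
  | succ k ih =>
    obtain ⟨h, hh, hemb, r, hrl, hW, hlen⟩ :=
      R.exists_pathGraph_embedding_and_infix_widthLT hR hl hnd hne
    by_cases hth : t / 3 ≤ h
    · exact ⟨h, hth, hemb⟩
    have hh1 : (1 : ℝ) ≤ h := by exact_mod_cast hh
    have htr : t ^ k ≤ r.length :=
      pow_le_of_pow_succ_le_mul_add hh1 (by linarith) (ht.trans (by exact_mod_cast hlen))
    have hr : r ≠ [] :=
      List.length_pos_iff.1 (by exact_mod_cast (pow_pos (by linarith) k).trans_le htr)
    set Y : Set V := {x | x ∈ r}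
    refine (ih (R.induce Y) hW (l := r.attachWith (· ∈ Y) fun _ => id) ?_ ?_ ?_ ?_).of_induce
    · exact (List.isChain_attachWith _).2 <|
        (hl.infix hrl).imp_of_mem_imp fun a b ha hb hab => ⟨ha, hb, hab⟩
    · exact .of_map Subtype.val (by simpa using hnd.sublist hrl.sublist)
    · simpa using hr
    · simpa using htr

end TreeRep

theorem stmt0_general {V : Type} [Fintype V] (k : ℕ) (G : SimpleGraph V) (n : ℕ)
    (hpw : PathwidthLT G k) (hpath : HasPathOfOrder G n) :
    HasInducedPathGE G ((1 / 3 : ℝ) * (n : ℝ) ^ ((1 : ℝ) / k)) := by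
  obtain ⟨m, R, hR⟩ := hpw
  obtain ⟨u, v, P, hP, hn⟩ := hpath
  have ht : ((n : ℝ) ^ ((1 : ℝ) / k)) ^ k ≤ P.support.length := by
    rw [P.length_support, hn]
    rcases k.eq_zero_or_pos with rfl | hk
    · rw [pow_zero, Nat.one_le_cast]; omega
    · rw [one_div, Real.rpow_inv_natCast_pow n.cast_nonneg hk.ne']
  rw [one_div_mul_eq_div]
  exact R.hasInducedPathGE_div_three hR P.isChain_adj_support hP.support_nodup P.support_ne_nil ht

theorem stmt0 {V : Type} [Fintype V] (k : ℕ) (hk : 0 < k) (G : SimpleGraph V) (n : ℕ)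
    (hpw : PathwidthLT G k) (hpath : HasPathOfOrder G n) :
    HasInducedPathGE G ((1 / 3 : ℝ) * (n : ℝ) ^ ((1 : ℝ) / k)) :=
  stmt0_general k G n hpw hpath
end

section
/- Let 𝒢 be a hereditary class of graphs and c, d > 0 real constants such that every graph in 𝒢 that has a Hamiltonian path and order n has an induced path of order at least c·(log₂ n)^d. Let ε ∈ (0,1) and let 𝒢_ε be the class of graphs G for which there exists a set X ⊆ V(G) with |X| ≤ |G|^ε such that G − X ∈ 𝒢. Then there is a constant c′ > 0, depending only on c, d and ε, such that every graph G ∈ 𝒢_ε that has a Hamiltonian path and order n has an induced path of order at least c′·(log₂ n)^d. -/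
open SimpleGraph Real

/-!
Deleting the at most `n ^ ε` vertices of `X` cuts a Hamiltonian path of `G` into at most
`|X| + 1` segments avoiding `X`, so some segment has `m ≳ n ^ (1 - ε)` vertices, i.e.
`log m ≳ (1 - ε) log n`. That segment is a Hamiltonian path of the subgraph it induces, which
lies in `𝒢` by heredity, so it contains an induced path of order `c (log m) ^ d`. When
`(1 - ε) / 4 · log n < 1` a single vertex is already long enough.
-/

namespace List

variable {α : Type*}

theorem exists_long_infix_forall (p : α → Bool) (l : List α) :
    ∃ t, t <:+: l ∧ (∀ x ∈ t, p x) ∧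
      l.length + 1 ≤ (l.countP (fun x => !p x) + 1) * (t.length + 1) := by
  rcases hd : l.dropWhile p with _ | ⟨y, b⟩
  · have hall : ∀ x ∈ l, p x := dropWhile_eq_nil_iff.mp hd
    have hcount : l.countP (fun x => !p x) = 0 := countP_eq_zero.mpr (by simpa using hall)
    exact ⟨l, infix_refl l, hall, by simp [hcount]⟩
  · set a := l.takeWhile p
    have hl : l = a ++ y :: b := by rw [← hd, takeWhile_append_dropWhile]
    have hy : p y = false := by simpa [hd] using head_dropWhile_not p (l := l) (by simp [hd])
    have hcount : l.countP (fun x => !p x) = b.countP (fun x => !p x) + 1 := by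
      have hrun : a.countP (fun x => !p x) = 0 :=
        countP_eq_zero.mpr fun x hx => by simp [mem_takeWhile_imp hx]
      rw [hl, countP_append, countP_cons, hrun, hy]
      simp
    have hb : b <:+: l := ⟨a ++ [y], [], by simp [hl]⟩
    have hlen : l.length = a.length + b.length + 1 := by
      rw [hl, length_append, length_cons]
      omega
    obtain ⟨t, htb, htp, ht⟩ := exists_long_infix_forall p b
    rw [hcount, hlen]
    by_cases hat : a.length ≤ t.length
    · exact ⟨t, htb.trans hb, htp, by nlinarith⟩
    · exact ⟨a, (takeWhile_prefix p).isInfix, fun x hx => mem_takeWhile_imp hx, by nlinarith⟩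
termination_by l.length
decreasing_by omega

theorem Nodup.length_le_ncard {l : List α} {s : Set α} (hl : l.Nodup) (hs : ∀ x ∈ l, x ∈ s)
    (hfin : s.Finite) : l.length ≤ s.ncard := by
  classical
  rw [← toFinset_card_of_nodup hl, ← Set.ncard_coe_finset]
  exact Set.ncard_le_ncard (fun x hx => hs x (by simpa using hx)) hfin

theorem Nodup.ncard_setOf_mem {l : List α} (hl : l.Nodup) : {x | x ∈ l}.ncard = l.length := by
  classical
  rw [← toFinset_card_of_nodup hl, ← Set.ncard_coe_finset]
  simp

end List

theorem logb_le_logb_of_succ_le_mul {ε : ℝ} (hε : 0 ≤ ε) {n k m : ℕ} (hk : (k : ℝ) ≤ n ^ ε)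
    (hnkm : n + 1 ≤ (k + 1) * (m + 1)) (hlarge : 1 ≤ (1 - ε) / 4 * logb 2 n) :
    (1 - ε) / 4 * logb 2 n ≤ logb 2 m := by
  have hn : (0 : ℝ) < n := by
    rcases Nat.eq_zero_or_pos n with rfl | hn
    · simp only [CharP.cast_eq_zero, logb_zero, mul_zero] at hlarge; linarith
    · exact_mod_cast hn
  have hnε : 0 < (n : ℝ) ^ ε := rpow_pos_of_pos hn ε
  have hk2 : (k : ℝ) + 1 ≤ 2 * n ^ ε := by
    have : (1 : ℝ) ≤ n ^ ε := one_le_rpow (by exact_mod_cast hn) hε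
    linarith
  have hsplit : (n : ℝ) ≤ 2 * n ^ ε * (m + 1) := by
    have : (n : ℝ) + 1 ≤ (k + 1) * (m + 1) := by exact_mod_cast hnkm
    nlinarith
  have hlog : logb 2 n ≤ 1 + ε * logb 2 n + logb 2 (m + 1) := by
    calc logb 2 n ≤ logb 2 (2 * n ^ ε * (m + 1)) :=
          logb_le_logb_of_le one_lt_two hn hsplit
      _ = 1 + ε * logb 2 n + logb 2 (m + 1) := by
          rw [logb_mul (by positivity) (by positivity), logb_mul (by norm_num) hnε.ne',
            logb_self_eq_one one_lt_two, logb_rpow_eq_mul_logb_of_pos hn]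
  rcases Nat.eq_zero_or_pos m with rfl | hm
  · simp only [CharP.cast_eq_zero, zero_add, logb_one, add_zero] at hlog; linarith
  have hm' : logb 2 ((m : ℝ) + 1) ≤ 1 + logb 2 m := by
    have hm1 : (1 : ℝ) ≤ m := by exact_mod_cast hm
    calc logb 2 ((m : ℝ) + 1) ≤ logb 2 (2 * m) :=
          logb_le_logb_of_le one_lt_two (by positivity) (by linarith)
      _ = 1 + logb 2 m := by
          rw [logb_mul (by norm_num) (by positivity), logb_self_eq_one one_lt_two]
  linarith

namespace SimpleGraph

variable {V : Type*} {G : SimpleGraph V}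

theorem hasHamPath_induce_of_isChain {l : List V} (hne : l ≠ []) (hchain : l.IsChain G.Adj)
    (hnd : l.Nodup) : HasHamPath (G.induce {v | v ∈ l}) := by
  have hsupp := Walk.support_ofSupport hne hchain
  let w := (Walk.ofSupport l hne hchain).induce {v | v ∈ l} (by simp [hsupp])
  refine ⟨_, _, w, ?_, fun v => ?_⟩
  · rw [Walk.isPath_def, Walk.support_induce]
    exact List.Nodup.of_map Subtype.val (by rwa [List.attachWith_map_subtype_val, hsupp])
  · rw [Walk.support_induce, List.mem_attachWith, hsupp]
    exact v.2

theorem HasHamPath.exists_isChain_nodup (h : HasHamPath G) :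
    ∃ l : List V, l.IsChain G.Adj ∧ l.Nodup ∧ ∀ v, v ∈ l := by
  obtain ⟨_, _, p, hp, hcover⟩ := h
  exact ⟨p.support, p.isChain_adj_support, hp.support_nodup, hcover⟩

theorem HasInducedPathGE.mono {r s : ℝ} (hrs : r ≤ s) (h : HasInducedPathGE G s) :
    HasInducedPathGE G r := by
  obtain ⟨m, hm, hemb⟩ := h
  exact ⟨m, hrs.trans hm, hemb⟩

theorem HasInducedPathGE.of_embedding {W : Type*} {H : SimpleGraph W} {r : ℝ}
    (h : HasInducedPathGE H r) (f : H ↪g G) : HasInducedPathGE G r := by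
  obtain ⟨m, hm, ⟨e⟩⟩ := h
  exact ⟨m, hm, ⟨f.comp e⟩⟩

theorem hasInducedPathGE_one (v : V) : HasInducedPathGE G 1 :=
  ⟨1, by simp, ⟨⟨⟨fun _ => v, fun a b _ => Subsingleton.elim a b⟩, fun {a b} => by
    simp [Subsingleton.elim a b]⟩⟩⟩

theorem HasHamPath.exists_long_path_avoiding [Fintype V] (h : HasHamPath G) (X : Set V) :
    ∃ t : List V, t.IsChain G.Adj ∧ t.Nodup ∧ (∀ v ∈ t, v ∉ X) ∧
      Fintype.card V + 1 ≤ (X.ncard + 1) * (t.length + 1) := by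
  classical
  obtain ⟨l, hchain, hnd, hcover⟩ := h.exists_isChain_nodup
  obtain ⟨t, htl, htX, hlen⟩ := l.exists_long_infix_forall (fun v => decide (v ∉ X))
  have hcard : Fintype.card V = l.length := by
    rw [← hnd.ncard_setOf_mem, ← Nat.card_eq_fintype_card, ← Set.ncard_univ]
    congr 1; ext v; simp [hcover]
  have hbad : l.countP (fun v => !decide (v ∉ X)) ≤ X.ncard := by
    rw [List.countP_eq_length_filter]
    exact (hnd.filter _).length_le_ncard (fun v hv => by simpa using (List.mem_filter.mp hv).2)
      X.toFinite
  refine ⟨t, hchain.infix htl, hnd.sublist htl.sublist, fun v hv => by simpa using htX v hv, ?_⟩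
  rw [hcard]
  exact hlen.trans (Nat.mul_le_mul_right _ (by omega))

end SimpleGraph

theorem stmt7 (𝒢 : ∀ {W : Type}, SimpleGraph W → Prop)
    (hhered : ∀ {W W' : Type} (G : SimpleGraph W) (H : SimpleGraph W'),
      𝒢 G → Nonempty (H ↪g G) → 𝒢 H)
    (c d : ℝ) (hc : 0 < c) (hd : 0 < d)
    (hbound : ∀ {W : Type} [Fintype W] (G : SimpleGraph W) (n : ℕ), 𝒢 G → HasHamPath G →
      Fintype.card W = n → HasInducedPathGE G (c * Real.logb 2 n ^ d))
    (ε : ℝ) (hε0 : 0 < ε) (hε1 : ε < 1) :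
    ∃ c' : ℝ, 0 < c' ∧
      ∀ {W : Type} [Fintype W] (G : SimpleGraph W) (n : ℕ),
        (∃ X : Set W, (X.ncard : ℝ) ≤ (Fintype.card W : ℝ) ^ ε ∧ 𝒢 (G.induce Xᶜ)) →
        HasHamPath G → Fintype.card W = n →
        HasInducedPathGE G (c' * Real.logb 2 n ^ d) := by
  classical
  set a := (1 - ε) / 4
  have ha : 0 < a := by simp only [a]; linarith
  refine ⟨min c 1 * a ^ d, by positivity, fun {W} _ G n ⟨X, hX, hGX⟩ hham hn => ?_⟩
  subst hn
  have hρ : 0 ≤ logb 2 (Fintype.card W) :=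
    div_nonneg (log_natCast_nonneg _) (log_nonneg one_le_two)
  have hc' : min c 1 * a ^ d * logb 2 (Fintype.card W) ^ d =
      min c 1 * (a * logb 2 (Fintype.card W)) ^ d := by
    rw [mul_rpow ha.le hρ, mul_assoc]
  rw [hc']
  by_cases hlarge : 1 ≤ a * logb 2 (Fintype.card W)
  · obtain ⟨t, hchain, hnd, htX, hlen⟩ := hham.exists_long_path_avoiding X
    have hlog : a * _ ≤ _ := logb_le_logb_of_succ_le_mul hε0.le hX hlen hlarge
    have hne : t ≠ [] := by
      rintro rfl
      simp only [List.length_nil, CharP.cast_eq_zero, logb_zero] at hlog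
      linarith
    have hH : 𝒢 (G.induce {v | v ∈ t}) :=
      hhered _ _ hGX ⟨G.induceHomOfLE fun v hv => htX v hv⟩
    have hcard : Fintype.card {v | v ∈ t} = t.length := by
      rw [← Nat.card_eq_fintype_card, Nat.card_coe_set_eq, hnd.ncard_setOf_mem]
    refine ((hbound _ _ hH (hasHamPath_induce_of_isChain hne hchain hnd) hcard).of_embedding
      (Embedding.induce _)).mono ?_
    calc min c 1 * (a * logb 2 (Fintype.card W)) ^ d
        ≤ c * (a * logb 2 (Fintype.card W)) ^ d := by gcongr; exact min_le_left c 1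
      _ ≤ c * logb 2 t.length ^ d := by gcongr
  · obtain ⟨_, v, -⟩ := hham
    refine (hasInducedPathGE_one v).mono ?_
    calc min c 1 * (a * logb 2 (Fintype.card W)) ^ d ≤ 1 * 1 ^ d := by
          gcongr
          · exact min_le_right c 1
          · exact le_of_not_ge hlarge
      _ = 1 := by simp
end

section
/- Let G be a graph on at least one vertex. If (R, {R_v}_{v∈V(G)}) is a varied path representation of G, then |G| ≥ |R|, i.e. G has at least as many vertices as R has nodes. -/
open SimpleGraph Real

lemma walk_ivt {m : ℕ} {S : Set (Fin m)} {x y : S}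
    (p : ((pathGraph m).induce S).Walk x y) (c : ℕ)
    (h : ((x : Fin m) : ℕ) ≤ c ∧ c ≤ ((y : Fin m) : ℕ) ∨
         ((y : Fin m) : ℕ) ≤ c ∧ c ≤ ((x : Fin m) : ℕ)) :
    ∃ z ∈ p.support, ((z : Fin m) : ℕ) = c := by
  induction p with
  | nil => exact ⟨_, SimpleGraph.Walk.start_mem_support _, by omega⟩
  | @cons u v w hadj q ih =>
    by_cases hc : ((u : Fin m) : ℕ) = c
    · exact ⟨u, by simp, hc⟩
    · have hadj' : (pathGraph m).Adj u v := hadj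
      rw [SimpleGraph.pathGraph_adj] at hadj'
      obtain ⟨z, hz, hzc⟩ := ih (by omega)
      exact ⟨z, by simp [hz], hzc⟩

lemma interval_mem {m : ℕ} {S : Set (Fin m)} (hc : ((pathGraph m).induce S).Connected)
    {a b : Fin m} (ha : a ∈ S) (hb : b ∈ S) {c : Fin m}
    (h1 : (a : ℕ) ≤ c) (h2 : (c : ℕ) ≤ b) : c ∈ S := by
  obtain ⟨p⟩ := hc.preconnected ⟨a, ha⟩ ⟨b, hb⟩
  obtain ⟨z, _, hzc⟩ := walk_ivt p c (Or.inl ⟨h1, h2⟩)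
  have : c = (z : Fin m) := Fin.ext hzc.symm
  rw [this]; exact z.2

theorem stmt16 {V : Type} [Fintype V] [Nonempty V] (G : SimpleGraph V) (m : ℕ)
    (R : TreeRep G (pathGraph m)) (hvaried : R.Varied) :
    m ≤ Fintype.card V := by
  rcases Nat.lt_or_ge m 2 with hm | hm
  · have := Fintype.card_pos (α := V); omega
  · have key : ∀ i : Fin m, ∃ v : V, i ∈ R.model v ∧
        (i.val + 1 < m → ∀ j : Fin m, j ∈ R.model v → (j : ℕ) ≤ i.val) := by
      intro i
      by_cases hi : i.val + 1 < m
      · set i' : Fin m := ⟨i.val + 1, hi⟩ with hi'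
        have hadj : (pathGraph m).Adj i i' := by
          rw [SimpleGraph.pathGraph_adj]; left; rfl
        obtain ⟨v, hv1, hv2⟩ := Set.not_subset.mp (hvaried hadj)
        refine ⟨v, hv1, fun _ j hj => ?_⟩
        by_contra hji
        push_neg at hji
        exact hv2 (interval_mem (R.model_connected v) hv1 hj
          (by simp [hi']) (by simp [hi']; omega))
      · have him : i.val = m - 1 := by omega
        set i' : Fin m := ⟨i.val - 1, by omega⟩ with hi'
        have hadj : (pathGraph m).Adj i i' := by
          rw [SimpleGraph.pathGraph_adj]; right; show i.val - 1 + 1 = i.val; omega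
        obtain ⟨v, hv1, _⟩ := Set.not_subset.mp (hvaried hadj)
        exact ⟨v, hv1, fun h => absurd h hi⟩
    choose f hf1 hf2 using key
    have hinj : Function.Injective f := by
      intro i j hij
      by_contra hne
      rcases Nat.lt_or_ge i.val j.val with h | h
      · have : (j : ℕ) ≤ i.val := hf2 i (by omega) j (hij ▸ hf1 j)
        omega
      · have h' : j.val < i.val := by
          rcases Nat.lt_or_ge j.val i.val with h' | h'
          · exact h'
          · exact absurd (Fin.ext (by omega)) hne
        have : (i : ℕ) ≤ j.val := hf2 j (by omega) i (hij ▸ hf1 i)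
        omega
    calc m = Fintype.card (Fin m) := (Fintype.card_fin m).symm
    _ ≤ Fintype.card V := Fintype.card_le_of_injective f hinj
end
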